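/- Let σ and μ be smooth functions on a Riemannian d-manifold (M,g), d ≥ 3, with n := dσ, m := dμ, ρ_σ := -(1/d)(Δσ + Jσ), ρ_μ := -(1/d)(Δμ + Jμ), and define ⟨σ,μ⟩ := g(n,m) + σ ρ_μ + μ ρ_σ (the weight-(1,1) bracket) and S_μ := |m|² + 2 μ ρ_μ. If f is a smooth strictly positive function, then S_{fμ} = f² S_μ + (2(d-2)/d) μ f g(m, df) + μ² E for some smooth function E; in particular S_{fμ} ≡ f² S_μ modulo the ideal generated by μ. -/

import Mathlib

/- Coordinate-based Riemannian calculus on `ℝᵈ`, used to state the results of the paper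
"Conformal Geometry of Embedded Manifolds with Boundary from Universal Holographic Formulae". -/

noncomputable section

open Matrix

namespace Holo

variable {d : ℕ}

/-- Points of the coordinate chart `ℝᵈ`. -/
abbrev Pt (d : ℕ) := Fin d → ℝ

/-- Partial derivative in the `i`-th coordinate direction. -/
def pd (i : Fin d) (f : Pt d → ℝ) (x : Pt d) : ℝ :=
  fderiv ℝ f x (Pi.single i 1)

/-- A Riemannian metric presented in coordinates. -/
abbrev Met (d : ℕ) := Pt d → Matrix (Fin d) (Fin d) ℝ

/-- The inverse metric `g^{ij}`. -/
def ginv (g : Met d) (x : Pt d) : Matrix (Fin d) (Fin d) ℝ := (g x)⁻¹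

/-- Christoffel symbols `Γ^k_{ij}` of the Levi-Civita connection of `g`. -/
def christof (g : Met d) (k i j : Fin d) (x : Pt d) : ℝ :=
  (1 / 2) * ∑ l, ginv g x k l *
    (pd i (fun y => g y j l) x + pd j (fun y => g y i l) x - pd l (fun y => g y i j) x)

/-- Riemann curvature `R^l_{ijk}`. -/
def riemann (g : Met d) (l i j k : Fin d) (x : Pt d) : ℝ :=
  pd i (fun y => christof g l j k y) x - pd j (fun y => christof g l i k y) x
    + ∑ m, (christof g l i m x * christof g m j k x - christof g l j m x * christof g m i k x)

/-- Ricci curvature `Ric_{jk} = R^i_{ijk}`. -/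
def ricci (g : Met d) (j k : Fin d) (x : Pt d) : ℝ := ∑ i, riemann g i i j k x

/-- Scalar curvature `Sc = g^{jk} Ric_{jk}`. -/
def scal (g : Met d) (x : Pt d) : ℝ := ∑ j, ∑ k, ginv g x j k * ricci g j k x

/-- The trace-adjusted scalar curvature `J = Sc/(2(d-1))`. -/
def Jc (g : Met d) (x : Pt d) : ℝ := scal g x / (2 * ((d : ℝ) - 1))

/-- Laplace–Beltrami operator `Δf = g^{ij}(∂_i∂_j f - Γ^k_{ij} ∂_k f)` (negative spectrum). -/
def laplacian (g : Met d) (f : Pt d → ℝ) (x : Pt d) : ℝ :=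
  ∑ i, ∑ j, ginv g x i j * (pd i (pd j f) x - ∑ k, christof g k i j x * pd k f x)

/-- Inner product of gradients, `g(du, dv) = g^{ij} ∂_i u ∂_j v`. -/
def gradInner (g : Met d) (u v : Pt d → ℝ) (x : Pt d) : ℝ :=
  ∑ i, ∑ j, ginv g x i j * pd i u x * pd j v x

/-- Squared gradient norm `|du|_g²`. -/
def gradSq (g : Met d) (u : Pt d → ℝ) (x : Pt d) : ℝ := gradInner g u u x

/-- `ρ_ν := -(1/d)(Δν + Jν)`. -/
def rho (g : Met d) (ν : Pt d → ℝ) (x : Pt d) : ℝ :=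
  -(1 / (d : ℝ)) * (laplacian g ν x + Jc g x * ν x)

/-- The S-curvature representative `S_ν = |dν|² + 2νρ_ν`. -/
def Sdens (g : Met d) (ν : Pt d → ℝ) (x : Pt d) : ℝ := gradSq g ν x + 2 * ν x * rho g ν x

/-- The weight-(1,1) bracket `⟨σ,μ⟩ = g(dσ,dμ) + σρ_μ + μρ_σ`. -/
def bracket (g : Met d) (σ μ : Pt d → ℝ) (x : Pt d) : ℝ :=
  gradInner g σ μ x + σ x * rho g μ x + μ x * rho g σ x

/-- Covariant Hessian `∇_a ∂_b μ`. -/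
def covHess (g : Met d) (μ : Pt d → ℝ) (a b : Fin d) (x : Pt d) : ℝ :=
  pd a (pd b μ) x - ∑ c, christof g c a b x * pd c μ x

/-- Unit conormal (covector) `m̂_b = ∂_b μ / |dμ|_g` of the level sets of `μ`. -/
def unitConormal (g : Met d) (μ : Pt d → ℝ) (b : Fin d) (x : Pt d) : ℝ :=
  pd b μ x / Real.sqrt (gradSq g μ x)

/-- Unit normal vector `m̂^a = g^{ab} m̂_b`. -/
def normalVec (g : Met d) (μ : Pt d → ℝ) (a : Fin d) (x : Pt d) : ℝ :=
  ∑ b, ginv g x a b * unitConormal g μ b x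

/-- Covariant derivative `∇_a m̂_b` of the unit conormal. -/
def covDConormal (g : Met d) (μ : Pt d → ℝ) (a b : Fin d) (x : Pt d) : ℝ :=
  pd a (fun y => unitConormal g μ b y) x - ∑ c, christof g c a b x * unitConormal g μ c x

/-- Mean curvature of the level sets of `μ`:
`H = (1/(d-1)) (g^{ab} - m̂^a m̂^b) ∇_a m̂_b` (average of eigenvalues of II). -/
def meanCurv (g : Met d) (μ : Pt d → ℝ) (x : Pt d) : ℝ :=
  (1 / ((d : ℝ) - 1)) *
    ∑ a, ∑ b, (ginv g x a b - normalVec g μ a x * normalVec g μ b x) * covDConormal g μ a b x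


section Aux

variable {d : ℕ}

lemma contDiff_pd {f : Pt d → ℝ} (hf : ContDiff ℝ (⊤ : ℕ∞) f) (i : Fin d) :
    ContDiff ℝ (⊤ : ℕ∞) (pd i f) :=
  (hf.fderiv_right (by simp)).clm_apply contDiff_const

lemma pd_add {u v : Pt d → ℝ} (hu : ContDiff ℝ (⊤ : ℕ∞) u) (hv : ContDiff ℝ (⊤ : ℕ∞) v) (i : Fin d)
    (x : Pt d) : pd i (fun y => u y + v y) x = pd i u x + pd i v x := by
  unfold pd
  rw [fderiv_fun_add ((hu.differentiable (by simp)) x) ((hv.differentiable (by simp)) x)]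
  simp

lemma pd_mul {u v : Pt d → ℝ} (hu : ContDiff ℝ (⊤ : ℕ∞) u) (hv : ContDiff ℝ (⊤ : ℕ∞) v) (i : Fin d)
    (x : Pt d) : pd i (fun y => u y * v y) x = u x * pd i v x + v x * pd i u x := by
  unfold pd
  rw [fderiv_fun_mul ((hu.differentiable (by simp)) x) ((hv.differentiable (by simp)) x)]
  simp [mul_comm]

lemma pd_pd_fmul {f μ : Pt d → ℝ} (hf : ContDiff ℝ (⊤ : ℕ∞) f) (hμ : ContDiff ℝ (⊤ : ℕ∞) μ)
    (i j : Fin d) (x : Pt d) :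
    pd i (pd j fun y => f y * μ y) x =
      f x * pd i (pd j μ) x + pd i f x * pd j μ x + pd j f x * pd i μ x
        + μ x * pd i (pd j f) x := by
  have h : pd j (fun y => f y * μ y) = fun y => f y * pd j μ y + μ y * pd j f y :=
    funext (pd_mul hf hμ j)
  rw [h, pd_add (hf.mul (contDiff_pd hμ j)) (hμ.mul (contDiff_pd hf j)),
      pd_mul hf (contDiff_pd hμ j), pd_mul hμ (contDiff_pd hf j)]
  ring

lemma ginv_symm (g : Met d) (hgpos : ∀ x, (g x).PosDef) (x : Pt d) (i j : Fin d) :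
    ginv g x i j = ginv g x j i := by
  have h : (g x)ᵀ = g x := by
    ext a b
    simpa using congrFun (congrFun (hgpos x).1 a) b
  unfold ginv
  conv_lhs => rw [← h, ← Matrix.transpose_nonsing_inv]
  simp [Matrix.transpose_apply]

lemma gradInner_symm (g : Met d) (hgpos : ∀ x, (g x).PosDef) (u v : Pt d → ℝ) (x : Pt d) :
    gradInner g u v x = gradInner g v u x := by
  unfold gradInner
  rw [Finset.sum_comm]
  refine Finset.sum_congr rfl fun i _ => Finset.sum_congr rfl fun j _ => ?_
  rw [ginv_symm g hgpos x j i]; ring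

lemma gradSq_fmul (g : Met d) {f μ : Pt d → ℝ} (hf : ContDiff ℝ (⊤ : ℕ∞) f) (hμ : ContDiff ℝ (⊤ : ℕ∞) μ)
    (x : Pt d) :
    gradSq g (fun y => f y * μ y) x =
      f x ^ 2 * gradSq g μ x
        + f x * μ x * (gradInner g μ f x + gradInner g f μ x)
        + μ x ^ 2 * gradSq g f x := by
  unfold gradSq gradInner
  have h : ∀ i j : Fin d,
      ginv g x i j * pd i (fun y => f y * μ y) x * pd j (fun y => f y * μ y) x
        = f x ^ 2 * (ginv g x i j * pd i μ x * pd j μ x)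
          + f x * μ x * (ginv g x i j * pd i μ x * pd j f x)
          + f x * μ x * (ginv g x i j * pd i f x * pd j μ x)
          + μ x ^ 2 * (ginv g x i j * pd i f x * pd j f x) := by
    intro i j
    rw [pd_mul hf hμ i, pd_mul hf hμ j]; ring
  simp only [h, Finset.sum_add_distrib, ← Finset.mul_sum]
  ring

lemma laplacian_fmul (g : Met d) {f μ : Pt d → ℝ} (hf : ContDiff ℝ (⊤ : ℕ∞) f) (hμ : ContDiff ℝ (⊤ : ℕ∞) μ)
    (x : Pt d) :
    laplacian g (fun y => f y * μ y) x =
      f x * laplacian g μ x + μ x * laplacian g f x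
        + gradInner g μ f x + gradInner g f μ x := by
  unfold laplacian gradInner
  have h : ∀ i j : Fin d,
      ginv g x i j * (pd i (pd j fun y => f y * μ y) x
          - ∑ k, christof g k i j x * pd k (fun y => f y * μ y) x)
        = f x * (ginv g x i j * (pd i (pd j μ) x - ∑ k, christof g k i j x * pd k μ x))
          + μ x * (ginv g x i j * (pd i (pd j f) x - ∑ k, christof g k i j x * pd k f x))
          + ginv g x i j * pd i μ x * pd j f x
          + ginv g x i j * pd i f x * pd j μ x := by
    intro i j
    rw [pd_pd_fmul hf hμ i j]
    have hk : ∀ k ∈ (Finset.univ : Finset (Fin d)),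
        christof g k i j x * pd k (fun y => f y * μ y) x
          = f x * (christof g k i j x * pd k μ x)
            + μ x * (christof g k i j x * pd k f x) := by
      intro k _; rw [pd_mul hf hμ k]; ring
    rw [Finset.sum_congr rfl hk, Finset.sum_add_distrib, ← Finset.mul_sum, ← Finset.mul_sum]
    ring
  simp only [h, Finset.sum_add_distrib, ← Finset.mul_sum]

lemma contDiff_det {A : Pt d → Matrix (Fin d) (Fin d) ℝ}
    (hA : ∀ i j, ContDiff ℝ (⊤ : ℕ∞) fun x => A x i j) :
    ContDiff ℝ (⊤ : ℕ∞) fun x => (A x).det := by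
  simp only [Matrix.det_apply']
  refine ContDiff.sum fun σ _ => contDiff_const.mul ?_
  exact contDiff_iff_contDiffAt.2 fun x => contDiffAt_prod fun i _ => (hA (σ i) i).contDiffAt

lemma contDiff_ginv (g : Met d) (hg : ∀ i j, ContDiff ℝ (⊤ : ℕ∞) fun x => g x i j)
    (hgpos : ∀ x, (g x).PosDef) (i j : Fin d) :
    ContDiff ℝ (⊤ : ℕ∞) fun x => ginv g x i j := by
  have hdet : ContDiff ℝ (⊤ : ℕ∞) fun x => (g x).det := contDiff_det hg
  have hne : ∀ x, (g x).det ≠ 0 := fun x => (hgpos x).det_pos.ne'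
  have hadj : ContDiff ℝ (⊤ : ℕ∞) fun x => (g x).adjugate i j := by
    simp only [Matrix.adjugate_apply]
    refine contDiff_det fun a b => ?_
    rcases eq_or_ne a j with h | h
    · simp only [Matrix.updateRow_apply, h, if_true]
      exact contDiff_const
    · simp only [Matrix.updateRow_apply, h, if_false]
      exact hg a b
  have heq : (fun x => ginv g x i j) = fun x => ((g x).det)⁻¹ * (g x).adjugate i j := by
    funext x
    unfold ginv
    rw [Matrix.inv_def]
    simp [Ring.inverse_eq_inv]
  rw [heq]
  exact (hdet.inv hne).mul hadj

lemma contDiff_christof (g : Met d) (hg : ∀ i j, ContDiff ℝ (⊤ : ℕ∞) fun x => g x i j)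
    (hgpos : ∀ x, (g x).PosDef) (k i j : Fin d) :
    ContDiff ℝ (⊤ : ℕ∞) fun x => christof g k i j x := by
  unfold christof
  refine contDiff_const.mul (ContDiff.sum fun l _ => ?_)
  exact (contDiff_ginv g hg hgpos k l).mul
    (((contDiff_pd (hg j l) i).add (contDiff_pd (hg i l) j)).sub (contDiff_pd (hg i j) l))

lemma contDiff_laplacian (g : Met d) (hg : ∀ i j, ContDiff ℝ (⊤ : ℕ∞) fun x => g x i j)
    (hgpos : ∀ x, (g x).PosDef) {f : Pt d → ℝ} (hf : ContDiff ℝ (⊤ : ℕ∞) f) :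
    ContDiff ℝ (⊤ : ℕ∞) fun x => laplacian g f x := by
  unfold laplacian
  refine ContDiff.sum fun i _ => ContDiff.sum fun j _ => ?_
  refine (contDiff_ginv g hg hgpos i j).mul ?_
  refine (contDiff_pd (contDiff_pd hf j) i).sub (ContDiff.sum fun k _ => ?_)
  exact (contDiff_christof g hg hgpos k i j).mul (contDiff_pd hf k)

lemma contDiff_gradInner (g : Met d) (hg : ∀ i j, ContDiff ℝ (⊤ : ℕ∞) fun x => g x i j)
    (hgpos : ∀ x, (g x).PosDef) {u v : Pt d → ℝ} (hu : ContDiff ℝ (⊤ : ℕ∞) u) (hv : ContDiff ℝ (⊤ : ℕ∞) v) :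
    ContDiff ℝ (⊤ : ℕ∞) fun x => gradInner g u v x := by
  unfold gradInner
  refine ContDiff.sum fun i _ => ContDiff.sum fun j _ => ?_
  exact ((contDiff_ginv g hg hgpos i j).mul (contDiff_pd hu i)).mul (contDiff_pd hv j)

end Aux

/-- Homogeneity of the S-curvature: with `S_μ = |dμ|² + 2μρ_μ`, for any smooth strictly
positive function `f` one has `S_{fμ} = f² S_μ + (2(d-2)/d) μ f g(dμ, df) + μ² E` for some
smooth function `E`; in particular `S_{fμ} ≡ f² S_μ` modulo the ideal generated by `μ`. -/
theorem Sdens_scaling {d : ℕ} (hd : 3 ≤ d)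
    (g : Met d) (hg : ∀ i j, ContDiff ℝ (⊤ : ℕ∞) fun x => g x i j) (hgpos : ∀ x, (g x).PosDef)
    (σ μ f : Pt d → ℝ) (hσ : ContDiff ℝ (⊤ : ℕ∞) σ) (hμ : ContDiff ℝ (⊤ : ℕ∞) μ) (hf : ContDiff ℝ (⊤ : ℕ∞) f)
    (hfpos : ∀ x, 0 < f x) :
    ∃ E : Pt d → ℝ, ContDiff ℝ (⊤ : ℕ∞) E ∧ ∀ x,
      Sdens g (fun y => f y * μ y) x =
        f x ^ 2 * Sdens g μ x
          + (2 * ((d : ℝ) - 2) / (d : ℝ)) * μ x * f x * gradInner g μ f x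
          + μ x ^ 2 * E x := by
  refine ⟨fun x => gradSq g f x - (2 / (d : ℝ)) * f x * laplacian g f x, ?_, ?_⟩
  · exact (contDiff_gradInner g hg hgpos hf hf).sub
      ((contDiff_const.mul hf).mul (contDiff_laplacian g hg hgpos hf))
  · intro x
    have hd0 : (d : ℝ) ≠ 0 := Nat.cast_ne_zero.mpr (by omega)
    simp only [Sdens, rho, gradSq_fmul g hf hμ x, laplacian_fmul g hf hμ x,
      gradInner_symm g hgpos f μ x]
    unfold gradSq
    field_simp
    ring
end Holo
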